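/- arXiv:2201.09543 — 3 statements merged into one kernel-verified Lean document; each statement's English description precedes it below -/
import Mathlib

section
/- Let A be an abelian length category. If 𝒯 is a torsion class (closed under extensions and quotients) and ℱ is a torsion-free class (closed under extensions and subobjects) with 𝒯 ∩ ℱ ≠ {0}, then there exists a brick S (an object with End(S) a division ring, in the K-linear case End(S) ≅ K) lying in 𝒯 ∩ ℱ. -/
open CategoryTheory CategoryTheory.Limits

section Aux

variable {C : Type*} [Category C] [Abelian C]

/-- iterate of an endomorphism -/
private def myPow {S : C} (f : S ⟶ S) : ℕ → (S ⟶ S)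
  | 0 => 𝟙 S
  | n + 1 => myPow f n ≫ f

private lemma myPow_succ {S : C} (f : S ⟶ S) (n : ℕ) :
    myPow f (n + 1) = myPow f n ≫ f := rfl

private lemma epi_myPow {S : C} (f : S ⟶ S) [Epi f] (n : ℕ) : Epi (myPow f n) := by
  induction n with
  | zero => exact inferInstanceAs (Epi (𝟙 S))
  | succ n ih => rw [myPow_succ]; exact @epi_comp _ _ _ _ _ _ ih _ ‹Epi f›

/-- If `g` is epi and `ker (g ≫ f) = ker g`, then `f` is mono. -/
private lemma mono_of_ker_stable {S : C} (f g : S ⟶ S) [Epi g]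
    (h : kernelSubobject (g ≫ f) = kernelSubobject g) : Mono f := by
  apply Abelian.mono_of_kernel_ι_eq_zero
  have hcond : pullback.fst g (kernel.ι f) ≫ g = pullback.snd g (kernel.ι f) ≫ kernel.ι f :=
    pullback.condition
  have hsndepi : Epi (pullback.snd g (kernel.ι f)) := by infer_instance
  have h1 : pullback.fst g (kernel.ι f) ≫ (g ≫ f) = 0 := by
    rw [← Category.assoc, hcond, Category.assoc, kernel.condition, comp_zero]
  have hfac : (kernelSubobject g).Factors (pullback.fst g (kernel.ι f)) :=
    h ▸ kernelSubobject_factors (g ≫ f) (pullback.fst g (kernel.ι f)) h1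
  have h2 : pullback.fst g (kernel.ι f) ≫ g = 0 :=
    (kernelSubobject_factors_iff g (pullback.fst g (kernel.ι f))).mp hfac
  have h3 : pullback.snd g (kernel.ι f) ≫ kernel.ι f = 0 := by rw [← hcond, h2]
  have h4 : pullback.snd g (kernel.ι f) = 0 := zero_of_comp_mono (kernel.ι f) h3
  rw [h4] at hsndepi
  have hker : IsZero (kernel f) :=
    IsZero.of_epi_zero (pullback g (kernel.ι f)) (kernel f)
  exact hker.eq_zero_of_src (kernel.ι f)

end Aux

/-- In an abelian length category (every object has a well-founded subobject lattice in
both directions, i.e. is artinian and noetherian), if a torsion class `T` (closed under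
extensions and quotients) and a torsion-free class `F` (closed under extensions and
subobjects) intersect nontrivially, then their intersection contains a brick, i.e. an
object all of whose nonzero endomorphisms are isomorphisms. -/
theorem stmt_3 {C : Type*} [Category C] [Abelian C]
    [∀ X : C, WellFoundedLT (Subobject X)] [∀ X : C, WellFoundedGT (Subobject X)]
    (T F : C → Prop)
    (hTquot : ∀ (X Y : C) (f : X ⟶ Y), Epi f → T X → T Y)
    (hText : ∀ S : ShortComplex C, S.ShortExact → T S.X₁ → T S.X₃ → T S.X₂)
    (hFsub : ∀ (X Y : C) (f : X ⟶ Y), Mono f → F Y → F X)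
    (hFext : ∀ S : ShortComplex C, S.ShortExact → F S.X₁ → F S.X₃ → F S.X₂)
    (hne : ∃ X : C, T X ∧ F X ∧ ¬ IsZero X) :
    ∃ S : C, T S ∧ F S ∧ ¬ IsZero S ∧ ∀ f : S ⟶ S, f ≠ 0 → IsIso f := by
  obtain ⟨X, hTX, hFX, hX0⟩ := hne
  -- the set of nonzero subobjects of `X` lying in `T ∩ F`
  set P : Set (Subobject X) := {s | T (s : C) ∧ F (s : C) ∧ ¬ IsZero (s : C)} with hP
  have htop : (⊤ : Subobject X) ∈ P := by
    have harr : IsIso ((⊤ : Subobject X).arrow) := inferInstance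
    refine ⟨hTquot X _ (inv (⊤ : Subobject X).arrow) inferInstance hTX,
      hFsub _ X ((⊤ : Subobject X).arrow) inferInstance hFX, fun hz => hX0 ?_⟩
    exact hz.of_iso (asIso (⊤ : Subobject X).arrow).symm
  obtain ⟨s, hsP, hsmin⟩ :=
    (IsWellFounded.wf (r := ((· < ·) : Subobject X → Subobject X → Prop))).has_min P ⟨⊤, htop⟩
  obtain ⟨hTs, hFs, hs0⟩ := hsP
  refine ⟨(s : C), hTs, hFs, hs0, fun f hf => ?_⟩
  -- Step 1 : `f` is an epimorphism
  have hepi : Epi f := by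
    set I := image f with hI
    set p := factorThruImage f with hp
    set ι := image.ι f with hιdef
    have hfac : p ≫ ι = f := image.fac f
    have hI0 : ¬ IsZero I := by
      intro hz
      apply hf
      rw [← hfac, hz.eq_zero_of_src ι, comp_zero]
    have hTI : T I := hTquot _ _ p inferInstance hTs
    have hFI : F I := hFsub _ _ ι inferInstance hFs
    -- the image as a subobject of `X`
    have : Mono (ι ≫ s.arrow) := mono_comp _ _
    set t : Subobject X := Subobject.mk (ι ≫ s.arrow) with ht
    have htP : t ∈ P := by
      have e : (t : C) ≅ I := Subobject.underlyingIso (ι ≫ s.arrow)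
      exact ⟨hTquot I _ e.inv inferInstance hTI,
        hFsub _ I e.hom inferInstance hFI, fun hz => hI0 (hz.of_iso e.symm)⟩
    have hts : t ≤ s := by
      have := Subobject.mk_le_mk_of_comm (f₁ := ι ≫ s.arrow) (f₂ := s.arrow) ι rfl
      rwa [Subobject.mk_arrow] at this
    have hteq : t = s := by
      rcases lt_or_eq_of_le hts with hlt | heq
      · exact absurd hlt (hsmin t htP)
      · exact heq
    -- from `t = s`, the mono `ι` is split, hence an isomorphism
    have hst : Subobject.mk s.arrow ≤ Subobject.mk (ι ≫ s.arrow) := by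
      rw [Subobject.mk_arrow, ← ht, hteq]
    set φ : (s : C) ⟶ I := Subobject.ofMkLEMk s.arrow (ι ≫ s.arrow) hst with hφ
    have hφcomp : φ ≫ (ι ≫ s.arrow) = s.arrow := Subobject.ofMkLEMk_comp hst
    have hφι : φ ≫ ι = 𝟙 (s : C) := by
      rw [← cancel_mono s.arrow, Category.assoc, Category.id_comp]
      exact hφcomp
    have hιφ : ι ≫ φ = 𝟙 I := by
      rw [← cancel_mono ι, Category.assoc, hφι, Category.id_comp, Category.comp_id]
    have : IsIso ι := ⟨φ, hιφ, hφι⟩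
    rw [← hfac]
    exact epi_comp p ι
  -- Step 2 : `f` is a monomorphism (kernels of powers of `f` stabilize)
  have hmono : Mono f := by
    set u : ℕ → Subobject (s : C) := fun n => kernelSubobject (myPow f n) with hu
    have humono : ∀ n, u n ≤ u (n + 1) := by
      intro n
      apply le_kernelSubobject
      rw [myPow_succ, ← Category.assoc, kernelSubobject_arrow_comp, zero_comp]
    obtain ⟨a, ⟨N, hN⟩, hamax⟩ :=
      (IsWellFounded.wf
        (r := ((· > ·) : Subobject (s : C) → Subobject (s : C) → Prop))).has_min
        (Set.range u) ⟨u 0, 0, rfl⟩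
    have hstab : u N = u (N + 1) := by
      rcases lt_or_eq_of_le (humono N) with hlt | heq
      · exact absurd (hN ▸ hlt) (hamax (u (N + 1)) ⟨N + 1, rfl⟩)
      · exact heq
    have hgepi : Epi (myPow f N) := epi_myPow f N
    exact mono_of_ker_stable f (myPow f N) (by rw [← myPow_succ]; exact hstab.symm)
  exact isIso_of_mono_of_epi f
end

section
/- Let Q be a finite quiver satisfying: every vertex has at most two incoming and at most two outgoing arrows, and there is a set X of paths of length 2 such that (gentle conditions) for any arrow α ending at i and distinct arrows β ≠ γ starting at i, exactly one of αβ, αγ lies in X, and dually. Then every arrow α ∈ Q_1 lies on exactly one maximal path or repeatable cycle: the arrows of Q are partitioned by the maximal nonzero paths in MP(A) and the cycles in Cyc(A) (up to cyclic permutation). -/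
/-- `GentleSucc s t R a b` means that the length-2 path `ab` is composable and is not a
relation, i.e. `ab ≠ 0` in the gentle algebra `A = KQ/⟨X⟩` (`R a b` encodes `ab ∈ X`). -/
def GentleSucc {V E : Type*} (s t : E → V) (R : E → E → Prop) (a b : E) : Prop :=
  t a = s b ∧ ¬ R a b

/-- A maximal nonzero path (element of `MP(A)`), encoded by its list of arrows: nonempty,
consecutive arrows compose to nonzero paths, and not extendable at either end. -/
def IsMaxPath {E : Type*} (Succ : E → E → Prop) (l : List E) : Prop :=
  l ≠ [] ∧ l.Chain' Succ ∧
    (∀ a ∈ l.head?, ∀ e, ¬ Succ e a) ∧ (∀ a ∈ l.getLast?, ∀ e, ¬ Succ a e)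

/-- A repeatable cycle (element of `Cyc(A)` up to cyclic permutation), encoded by its list
of arrows: nonempty and cyclically composable with all composites nonzero. -/
def IsRepCycle {E : Type*} (Succ : E → E → Prop) (l : List E) : Prop :=
  l ≠ [] ∧ l.Chain' Succ ∧ ∀ a ∈ l.getLast?, ∀ b ∈ l.head?, Succ a b

/-!
Write `a ⟶ b` when `ab` is a nonzero path. The gentle conditions say exactly that every arrow
has at most one successor and at most one predecessor for `⟶`. Hence a longest repetition-free
chain through `e` either closes up into a repeatable cycle or cannot be extended at either end,
i.e. is a maximal path. Two maximal paths, or two cycles, through `e` agree because `⟶` is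
functional in both directions, and a cycle through `e` can be followed forever, which a maximal
path through `e` cannot.
-/

namespace Relator

theorem RightUnique.flip {α β : Type*} {r : α → β → Prop} (h : RightUnique r) :
    LeftUnique (flip r) :=
  fun _ _ _ h₁ h₂ => h h₁ h₂

end Relator

open List Relator

section Chains

variable {α : Type*} {S : α → α → Prop}

theorem List.IsChain.prefix_or_prefix (hS : RightUnique S) {a : α} {u v : List α}
    (hu : IsChain S (a :: u)) (hv : IsChain S (a :: v)) : u <+: v ∨ v <+: u := by
  induction u generalizing a v with
  | nil => exact .inl nil_prefix
  | cons b u ih =>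
    cases v with
    | nil => exact .inr nil_prefix
    | cons c v =>
      obtain ⟨hab, hu⟩ := isChain_cons_cons.1 hu
      obtain ⟨hac, hv⟩ := isChain_cons_cons.1 hv
      obtain rfl := hS hab hac
      simpa only [prefix_cons_inj] using ih hu hv

theorem List.IsChain.prefix_of_forall_not_rel (hS : RightUnique S) {a : α} {u v : List α}
    (hu : IsChain S (a :: u)) (hmax : ∀ x ∈ (a :: u).getLast?, ∀ y, ¬ S x y)
    (hv : IsChain S (a :: v)) : v <+: u := by
  induction v generalizing a u with
  | nil => exact nil_prefix
  | cons c v ih =>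
    obtain ⟨hac, hv⟩ := isChain_cons_cons.1 hv
    cases u with
    | nil => exact absurd hac (hmax a rfl c)
    | cons b u =>
      obtain ⟨hab, hu⟩ := isChain_cons_cons.1 hu
      obtain rfl := hS hab hac
      rw [getLast?_cons_cons] at hmax
      exact (prefix_cons_inj b).2 (ih hu hmax hv)

theorem List.IsChain.mem_head?_of_rel (hS : LeftUnique S) {l : List α} {a b : α}
    (hn : l.Nodup) (hc : IsChain S l) (ha : a ∈ l.getLast?) (hb : b ∈ l) (hab : S a b) :
    b ∈ l.head? := by
  obtain ⟨p, q, rfl⟩ := append_of_mem hb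
  rcases eq_nil_or_concat p with rfl | ⟨p, c, rfl⟩
  · rfl
  · exfalso
    rw [concat_eq_append] at hc hn
    have hcb : S c b := (isChain_append.1 hc).2.2 c (by simp) b rfl
    obtain rfl := hS hcb hab
    rw [getLast?_append_cons] at ha
    exact disjoint_of_nodup_append hn (by simp) (mem_of_mem_getLast? ha)

theorem List.IsChain.mem_getLast?_of_rel (hS : RightUnique S) {l : List α} {a b : α}
    (hn : l.Nodup) (hc : IsChain S l) (hb : b ∈ l.head?) (ha : a ∈ l) (hab : S a b) :
    a ∈ l.getLast? := by
  rw [← head?_reverse]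
  refine (isChain_reverse.2 hc).mem_head?_of_rel (S := flip S) hS.flip (nodup_reverse.2 hn) ?_
    (mem_reverse.2 ha) hab
  rwa [getLast?_reverse]

theorem exists_longest_nodup_chain [Finite α] (e : α) :
    ∃ l : List α, (l.Nodup ∧ IsChain S l ∧ e ∈ l) ∧
      ∀ l' : List α, l'.Nodup ∧ IsChain S l' ∧ e ∈ l' → l'.length ≤ l.length := by
  have := Fintype.ofFinite α
  have hfin : {l : List α | l.Nodup ∧ IsChain S l ∧ e ∈ l}.Finite :=
    (List.finite_length_le α (Fintype.card α)).subset fun l hl => hl.1.length_le_card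
  exact Set.exists_max_image _ length hfin ⟨[e], nodup_singleton e, isChain_singleton e, by simp⟩

end Chains

section Decomposition

variable {α : Type*} {S : α → α → Prop}

theorem IsMaxPath.isChain_cons_of_append {p q : List α} {e : α}
    (hl : IsMaxPath S (p ++ e :: q)) :
    IsChain S (e :: q) ∧ ∀ x ∈ (e :: q).getLast?, ∀ y, ¬ S x y := by
  obtain ⟨-, hc, -, hlast⟩ := hl
  exact ⟨hc.suffix (suffix_append p _), by simpa only [getLast?_append_cons] using hlast⟩

theorem IsMaxPath.reverse {l : List α} (hl : IsMaxPath S l) : IsMaxPath (flip S) l.reverse := by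
  obtain ⟨hne, hc, hhead, hlast⟩ := hl
  exact ⟨reverse_ne_nil_iff.2 hne, isChain_reverse.2 hc, by rwa [head?_reverse],
    by rwa [getLast?_reverse]⟩

theorem IsMaxPath.right_eq (hS : RightUnique S) {p q p' q' : List α} {e : α}
    (hl : IsMaxPath S (p ++ e :: q)) (hl' : IsMaxPath S (p' ++ e :: q')) : q = q' := by
  obtain ⟨hc, hmax⟩ := hl.isChain_cons_of_append
  obtain ⟨hc', hmax'⟩ := hl'.isChain_cons_of_append
  have hqq' : q <+: q' := hc'.prefix_of_forall_not_rel hS hmax' hc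
  have hq'q : q' <+: q := hc.prefix_of_forall_not_rel hS hmax hc'
  exact hqq'.eq_of_length (hqq'.length_le.antisymm hq'q.length_le)

theorem IsMaxPath.eq_of_mem (hS : BiUnique S) {l l' : List α} {e : α} (hl : IsMaxPath S l)
    (he : e ∈ l) (hl' : IsMaxPath S l') (he' : e ∈ l') : l = l' := by
  obtain ⟨p, q, rfl⟩ := append_of_mem he
  obtain ⟨p', q', rfl⟩ := append_of_mem he'
  have hrev : ∀ p q : List α, (p ++ e :: q).reverse = q.reverse ++ e :: p.reverse := by simp
  have hp := (hrev p q ▸ hl.reverse).right_eq hS.1.flip (hrev p' q' ▸ hl'.reverse)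
  rw [hl.right_eq hS.2 hl', reverse_injective hp]

theorem isRepCycle_iff_cycleChain {l : List α} :
    IsRepCycle S l ↔ l ≠ [] ∧ Cycle.Chain S (l : Cycle α) := by
  cases l with
  | nil => simp [IsRepCycle]
  | cons a l =>
    rw [Cycle.chain_coe_cons, ← cons_append, isChain_append]
    exact ⟨fun ⟨_, hc, hcyc⟩ => ⟨cons_ne_nil a l, hc, isChain_singleton a, hcyc⟩,
      fun ⟨hne, hc, _, hcyc⟩ => ⟨hne, hc, hcyc⟩⟩

theorem IsRepCycle.of_isRotated {l l' : List α} (h : IsRepCycle S l) (hr : l ~r l') :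
    IsRepCycle S l' := by
  rw [isRepCycle_iff_cycleChain] at h ⊢
  exact ⟨fun h' => h.1 (isRotated_nil_iff.1 (h' ▸ hr)), Cycle.coe_eq_coe.2 hr ▸ h.2⟩

theorem IsRepCycle.exists_cons_isRotated {l : List α} {e : α} (h : IsRepCycle S l)
    (he : e ∈ l) : ∃ m, IsRepCycle S (e :: m) ∧ l ~r e :: m := by
  obtain ⟨p, q, rfl⟩ := append_of_mem he
  have hr : p ++ e :: q ~r e :: (q ++ p) := isRotated_append
  exact ⟨q ++ p, h.of_isRotated hr, hr⟩

theorem IsRepCycle.isChain_cons_append_singleton {m : List α} {e : α}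
    (h : IsRepCycle S (e :: m)) : IsChain S (e :: (m ++ [e])) :=
  (Cycle.chain_coe_cons S e m).1 (isRepCycle_iff_cycleChain.1 h).2

theorem IsRepCycle.exists_isChain_cons_length_ge {m : List α} {e : α}
    (h : IsRepCycle S (e :: m)) (n : ℕ) : ∃ w, IsChain S (e :: w) ∧ n ≤ w.length := by
  induction n with
  | zero => exact ⟨[], isChain_singleton e, le_rfl⟩
  | succ n ih =>
    obtain ⟨w, hw, hn⟩ := ih
    refine ⟨m ++ e :: w, ?_, by simp only [length_append, length_cons]; omega⟩
    simpa using
      h.isChain_cons_append_singleton.append_overlap (l₁ := e :: m) hw (cons_ne_nil e [])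

theorem IsRepCycle.tail_eq (hS : RightUnique S) {m m' : List α} {e : α}
    (h : IsRepCycle S (e :: m)) (h' : IsRepCycle S (e :: m'))
    (hn : (e :: m).Nodup) (hn' : (e :: m').Nodup) : m = m' := by
  have of_prefix : ∀ {m m' : List α}, (e :: m').Nodup → m ++ [e] <+: m' ++ [e] → m = m' := by
    intro m m' hn' hp
    -- if `m` were shorter, `m ++ [e]` would be a prefix of `m'`, putting `e` inside `m'`
    have hlen : m.length = m'.length := by
      by_contra hne
      have hle := hp.length_le
      simp only [length_append, length_singleton] at hle
      have : m ++ [e] <+: m' := prefix_of_prefix_length_le hp (prefix_append m' [e])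
        (by simp only [length_append, length_singleton]; omega)
      exact (nodup_cons.1 hn').1 (this.subset (by simp))
    exact append_left_injective [e] (hp.eq_of_length (by simp [hlen]))
  rcases h.isChain_cons_append_singleton.prefix_or_prefix hS
    h'.isChain_cons_append_singleton with hp | hp
  · exact of_prefix hn' hp
  · exact (of_prefix hn hp).symm

theorem IsRepCycle.isRotated (hS : RightUnique S) {l l' : List α} {e : α} (hn : l.Nodup)
    (hn' : l'.Nodup) (h : IsRepCycle S l) (he : e ∈ l) (h' : IsRepCycle S l') (he' : e ∈ l') :
    l ~r l' := by
  obtain ⟨m, hm, hr⟩ := h.exists_cons_isRotated he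
  obtain ⟨m', hm', hr'⟩ := h'.exists_cons_isRotated he'
  rw [hm.tail_eq hS hm' (hr.perm.nodup_iff.1 hn) (hr'.perm.nodup_iff.1 hn')] at hr
  exact hr.trans hr'.symm

theorem IsMaxPath.not_mem_of_isRepCycle (hS : RightUnique S) {l c : List α} {e : α}
    (hl : IsMaxPath S l) (he : e ∈ l) (hc : IsRepCycle S c) : e ∉ c := by
  intro hec
  obtain ⟨m, hm, -⟩ := hc.exists_cons_isRotated hec
  obtain ⟨p, q, rfl⟩ := append_of_mem he
  obtain ⟨hq, hmax⟩ := hl.isChain_cons_of_append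
  obtain ⟨w, hw, hlen⟩ := hm.exists_isChain_cons_length_ge (q.length + 1)
  have := (hq.prefix_of_forall_not_rel hS hmax hw).length_le
  omega

theorem exists_isMaxPath_or_isRepCycle [Finite α] (hS : BiUnique S) (e : α) :
    (∃ l : List α, l.Nodup ∧ IsMaxPath S l ∧ e ∈ l) ∨
      (∃ l : List α, l.Nodup ∧ IsRepCycle S l ∧ e ∈ l) := by
  obtain ⟨l, ⟨hn, hc, he⟩, hlongest⟩ := exists_longest_nodup_chain (S := S) e
  have hne : l ≠ [] := ne_nil_of_mem he
  obtain ⟨a, ha⟩ := Option.isSome_iff_exists.1 (getLast?_isSome.2 hne)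
  obtain ⟨b, hb⟩ := Option.isSome_iff_exists.1 (isSome_head?.2 hne)
  have succ_mem : ∀ c, S a c → c ∈ l := fun c hac => by
    by_contra hcl
    have := hlongest (l ++ [c]) ⟨concat_eq_append ▸ hn.concat hcl,
      hc.append (isChain_singleton c) (by simpa [ha]), mem_append_left _ he⟩
    simp at this
  have pred_mem : ∀ c, S c b → c ∈ l := fun c hcb => by
    by_contra hcl
    have := hlongest (c :: l)
      ⟨nodup_cons.2 ⟨hcl, hn⟩, hc.cons (by simpa [hb]), mem_cons_of_mem c he⟩
    simp at this
  by_cases hsucc : ∃ c, S a c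
  · obtain ⟨c, hac⟩ := hsucc
    have hcb : c ∈ l.head? := hc.mem_head?_of_rel hS.1 hn ha (succ_mem c hac) hac
    refine .inr ⟨l, hn, ⟨hne, hc, fun x hx y hy => ?_⟩, he⟩
    rwa [Option.mem_unique hx ha, Option.mem_unique hy hcb]
  · refine .inl ⟨l, hn, ⟨hne, hc, fun x hx y hyx => ?_, fun x hx y hxy => ?_⟩, he⟩
    · obtain rfl := Option.mem_unique hx hb
      obtain rfl := Option.mem_unique (hc.mem_getLast?_of_rel hS.2 hn hx (pred_mem y hyx) hyx) ha
      exact hsucc ⟨x, hyx⟩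
    · obtain rfl := Option.mem_unique hx ha
      exact hsucc ⟨y, hxy⟩

end Decomposition

theorem biUnique_gentleSucc {V E : Type*} {s t : E → V} {R : E → E → Prop}
    (hgd : ∀ a b c : E, b ≠ c → t a = s b → t a = s c → (R a b ↔ ¬ R a c))
    (hge : ∀ a b c : E, b ≠ c → t b = s a → t c = s a → (R b a ↔ ¬ R c a)) :
    BiUnique (GentleSucc s t R) := by
  refine ⟨fun a b c ⟨hac, hRac⟩ ⟨hbc, hRbc⟩ => ?_, fun a b c ⟨hab, hRab⟩ ⟨hac, hRac⟩ => ?_⟩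
  · by_contra hne
    exact hRac ((hge c a b hne hac hbc).2 hRbc)
  · by_contra hne
    exact hRab ((hgd a b c hne hab hac).2 hRac)

theorem stmt_16_general {V E : Type*} [Fintype E]
    (s t : E → V) (R : E → E → Prop)
    (hgd : ∀ a b c : E, b ≠ c → t a = s b → t a = s c → (R a b ↔ ¬ R a c))
    (hge : ∀ a b c : E, b ≠ c → t b = s a → t c = s a → (R b a ↔ ¬ R c a)) :
    ∀ e : E,
      ((∃ l : List E, l.Nodup ∧ IsMaxPath (GentleSucc s t R) l ∧ e ∈ l) ∨
        (∃ l : List E, l.Nodup ∧ IsRepCycle (GentleSucc s t R) l ∧ e ∈ l)) ∧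
      (∀ l l' : List E, IsMaxPath (GentleSucc s t R) l → e ∈ l →
        IsMaxPath (GentleSucc s t R) l' → e ∈ l' → l = l') ∧
      (∀ l l' : List E, l.Nodup → l'.Nodup → IsRepCycle (GentleSucc s t R) l → e ∈ l →
        IsRepCycle (GentleSucc s t R) l' → e ∈ l' → l.IsRotated l') ∧
      (∀ l l' : List E, IsMaxPath (GentleSucc s t R) l → e ∈ l →
        l'.Nodup → IsRepCycle (GentleSucc s t R) l' → e ∉ l') := by
  have hS := biUnique_gentleSucc hgd hge
  intro e
  exact ⟨exists_isMaxPath_or_isRepCycle hS e,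
    fun _ _ hl he hl' he' => hl.eq_of_mem hS he hl' he',
    fun _ _ hn hn' hl he hl' he' => IsRepCycle.isRotated hS.2 hn hn' hl he hl' he',
    fun _ _ hl he _ hl' => hl.not_mem_of_isRepCycle hS.2 he hl'⟩

/-- In a gentle algebra `A = KQ/⟨X⟩` (vertices with at most two incoming and two outgoing
arrows; for `α` ending at `i` and distinct `β ≠ γ` starting at `i`, exactly one of
`αβ, αγ` lies in `X`, and dually), every arrow lies on exactly one maximal nonzero path or
repeatable cycle: the arrows of `Q` are partitioned by the paths in `MP(A)` and the cycles
in `Cyc(A)` (the latter taken up to cyclic permutation). -/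
theorem stmt_16 {V E : Type*} [DecidableEq V] [DecidableEq E] [Fintype E]
    (s t : E → V) (R : E → E → Prop)
    (hR : ∀ a b, R a b → t a = s b)
    (hout : ∀ v : V, (Finset.univ.filter fun e => s e = v).card ≤ 2)
    (hin : ∀ v : V, (Finset.univ.filter fun e => t e = v).card ≤ 2)
    (hgd : ∀ a b c : E, b ≠ c → t a = s b → t a = s c → (R a b ↔ ¬ R a c))
    (hge : ∀ a b c : E, b ≠ c → t b = s a → t c = s a → (R b a ↔ ¬ R c a)) :
    ∀ e : E,
      ((∃ l : List E, l.Nodup ∧ IsMaxPath (GentleSucc s t R) l ∧ e ∈ l) ∨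
        (∃ l : List E, l.Nodup ∧ IsRepCycle (GentleSucc s t R) l ∧ e ∈ l)) ∧
      (∀ l l' : List E, IsMaxPath (GentleSucc s t R) l → e ∈ l →
        IsMaxPath (GentleSucc s t R) l' → e ∈ l' → l = l') ∧
      (∀ l l' : List E, l.Nodup → l'.Nodup → IsRepCycle (GentleSucc s t R) l → e ∈ l →
        IsRepCycle (GentleSucc s t R) l' → e ∈ l' → l.IsRotated l') ∧
      (∀ l l' : List E, IsMaxPath (GentleSucc s t R) l → e ∈ l →
        l'.Nodup → IsRepCycle (GentleSucc s t R) l' → e ∉ l') :=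
  stmt_16_general s t R hgd hge
end

section
/- Let A be a gentle algebra with the partition of arrows into maximal paths and repeatable cycles as above, let h = Σ_{i ∈ Q_0} [S_i] ∈ K_0(fd A), let X be a set of representatives of Cyc(A) modulo cyclic permutation, and for each c = pβ ∈ X let M(p_c) be the string module of the cycle with its last arrow removed. Then, with suitable multiplicities a_p ∈ {0,1,2} depending only on local arrow configurations, 2h = Σ_{c ∈ X} [M(p_c)] + Σ_{p ∈ M̄P(A)} a_p [M(p)] holds in K_0(fd A); consequently, any θ ∈ K_0(proj A)_ℝ with θ(M(p_c)) = 0 for all c ∈ X and θ(M(p)) = 0 for all p ∈ M̄P(A) satisfies θ(h) = 0. -/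
/-- The multiplicity of the vertex `v` in the dimension vector `[M(p)]` of the string
module of a maximal path `p` with arrow list `l`: the number of visits of `p` to `v`. -/
def lineVisits {V E : Type*} [DecidableEq V] (s t : E → V) (l : List E) (v : V) : ℕ :=
  (l.filter fun e => s e = v).length + (l.getLast?).elim 0 fun a => if t a = v then 1 else 0

/-- The multiplicity of `v` in `[M(p_c)]`, where `p_c` is the cycle `c` (arrow list `l`)
with its last arrow removed. -/
def cycVisits {V E : Type*} [DecidableEq V] (s : E → V) (l : List E) (v : V) : ℕ :=
  (l.filter fun e => s e = v).length

/-!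
At a vertex `v`, every arrow starting at `v` contributes one visit (to the unique line or circle
containing it), and every line ending at `v` contributes one more visit through its last arrow.
The last arrows of lines are exactly the arrows into `v` without a gentle successor, so the
number of visits is `#out(v) + #dead(v)`. Gentleness forces `#out(v) + #dead(v) ≤ 2`, and
the multiplicity `a v` is exactly the defect. Pairing the resulting identity with `θ` gives
`2 θ(h) = 0`.
-/

open Finset

theorem List.sum_count_eq_countP {E : Type*} [DecidableEq E] (F : Finset E) (l : List E) :
    ∑ x ∈ F, l.count x = l.countP (· ∈ F) := by
  induction l with
  | nil => simp
  | cons a l ih =>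
    simp only [List.count_cons, sum_add_distrib, ih, beq_iff_eq, List.countP_cons]
    simp

theorem List.IsChain.exists_rel_of_mem_of_append_singleton {α : Type*} {S : α → α → Prop}
    {l : List α} {g x : α} (h : (l ++ [g]).IsChain S) (hx : x ∈ l) : ∃ y, S x y := by
  obtain ⟨l₁, l₂, rfl⟩ := List.append_of_mem hx
  rcases l₂ with _ | ⟨y, l₂⟩ <;> simp at h
  exacts [⟨g, h.2⟩, ⟨y, h.2.1⟩]

theorem sum_sum_count_of_partition {E : Type*} [DecidableEq E] {Lines Circs : Finset (List E)}
    (hpart : ∀ e : E, ((∑ l ∈ Lines, l.count e) + ∑ l ∈ Circs, l.count e) = 1) (F : Finset E) :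
    (∑ l ∈ Lines, ∑ x ∈ F, l.count x) + ∑ l ∈ Circs, ∑ x ∈ F, l.count x = #F := by
  rw [sum_comm, sum_comm (s := Circs), ← sum_add_distrib]
  simp [hpart]

section Visits

variable {V E : Type*} [Fintype E] [DecidableEq V]

open Classical in
/-- The arrows into `v` without successor; these are the last arrows of the lines ending at `v`. -/
noncomputable def deadEnds (t : E → V) (Succ : E → E → Prop) (v : V) : Finset E :=
  {x | t x = v ∧ ∀ e, ¬ Succ x e}

variable {s t : E → V} {Succ : E → E → Prop} {l : List E} {v : V}

theorem mem_deadEnds {x : E} : x ∈ deadEnds t Succ v ↔ t x = v ∧ ∀ e, ¬ Succ x e := by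
  simp [deadEnds]

variable [DecidableEq E]

theorem cycVisits_eq_sum_count : cycVisits s l v = ∑ x ∈ {e | s e = v}, l.count x := by
  simp [cycVisits, List.sum_count_eq_countP, List.countP_eq_length_filter]

theorem IsMaxPath.sum_count_deadEnds (hl : IsMaxPath Succ l) :
    ∑ x ∈ deadEnds t Succ v, l.count x =
      l.getLast?.elim 0 fun a => if t a = v then 1 else 0 := by
  obtain ⟨hne, hchain, -, hlast⟩ := hl
  obtain ⟨l, g, rfl⟩ := (l.eq_nil_or_concat').resolve_left hne
  have hg : ∀ e, ¬ Succ g e := hlast g (by simp)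
  have hl : ∀ x ∈ deadEnds t Succ v, l.count x = 0 := fun x hx =>
    List.count_eq_zero.2 fun hxl =>
      let ⟨y, hy⟩ := List.IsChain.exists_rel_of_mem_of_append_singleton hchain hxl
      (mem_deadEnds.1 hx).2 y hy
  simp only [List.getLast?_concat, List.count_append, sum_add_distrib, sum_eq_zero hl]
  simp [List.count_singleton, mem_deadEnds, hg]

theorem IsRepCycle.sum_count_deadEnds (hl : IsRepCycle Succ l) :
    ∑ x ∈ deadEnds t Succ v, l.count x = 0 := by
  obtain ⟨hne, hchain, hcycle⟩ := hl
  obtain ⟨l, g, rfl⟩ := (l.eq_nil_or_concat').resolve_left hne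
  refine sum_eq_zero fun x hx => List.count_eq_zero.2 fun hxl => ?_
  obtain ⟨y, hy⟩ : ∃ y, Succ x y := by
    rcases List.mem_append.1 hxl with hxl | hxg
    · exact List.IsChain.exists_rel_of_mem_of_append_singleton hchain hxl
    · obtain rfl := List.mem_singleton.1 hxg
      exact ⟨_, hcycle x (by simp) _ (List.head?_eq_some_head (by simp))⟩
  exact (mem_deadEnds.1 hx).2 y hy

theorem IsMaxPath.lineVisits_eq (hl : IsMaxPath Succ l) :
    lineVisits s t l v = cycVisits s l v + ∑ x ∈ deadEnds t Succ v, l.count x := by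
  rw [hl.sum_count_deadEnds]
  rfl

theorem sum_lineVisits_add_sum_cycVisits {Lines Circs : Finset (List E)}
    (hLines : ∀ l ∈ Lines, IsMaxPath Succ l) (hCircs : ∀ l ∈ Circs, IsRepCycle Succ l)
    (hpart : ∀ e : E, ((∑ l ∈ Lines, l.count e) + ∑ l ∈ Circs, l.count e) = 1) (v : V) :
    (∑ l ∈ Lines, lineVisits s t l v) + ∑ l ∈ Circs, cycVisits s l v =
      #{e | s e = v} + #(deadEnds t Succ v) := by
  have hout := sum_sum_count_of_partition hpart {e | s e = v}
  have hdead := sum_sum_count_of_partition hpart (deadEnds t Succ v)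
  have hcirc : ∑ l ∈ Circs, ∑ x ∈ deadEnds t Succ v, l.count x = 0 :=
    sum_eq_zero fun l hl => (hCircs l hl).sum_count_deadEnds
  simp only [sum_congr rfl fun l hl => (hLines l hl).lineVisits_eq, cycVisits_eq_sum_count,
    sum_add_distrib]
  omega

end Visits

section Gentle

variable {V E : Type*} [Fintype E] [DecidableEq V] {s t : E → V} {R : E → E → Prop} {v : V}

theorem mem_deadEnds_gentleSucc {x : E} :
    x ∈ deadEnds t (GentleSucc s t R) v ↔ t x = v ∧ ∀ e, s e = v → R x e := by
  simp only [mem_deadEnds, GentleSucc, not_and, not_not]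
  constructor <;> rintro ⟨rfl, h⟩ <;> exact ⟨rfl, fun e he => h e he.symm⟩

theorem deadEnds_gentleSucc_eq_empty
    (hgd : ∀ a b c : E, b ≠ c → t a = s b → t a = s c → (R a b ↔ ¬ R a c))
    (hout : 2 ≤ #{e | s e = v}) : deadEnds t (GentleSucc s t R) v = ∅ := by
  obtain ⟨y, hy, z, hz, hyz⟩ := one_lt_card.1 hout
  simp only [mem_filter, mem_univ, true_and] at hy hz
  refine eq_empty_of_forall_notMem fun x hx => ?_
  obtain ⟨hxv, hxR⟩ := mem_deadEnds_gentleSucc.1 hx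
  exact (hgd x y z hyz (hxv.trans hy.symm) (hxv.trans hz.symm)).1 (hxR y hy) (hxR z hz)

theorem deadEnds_gentleSucc_of_forall_ne (hout : ∀ e, s e ≠ v) :
    deadEnds t (GentleSucc s t R) v = ({x | t x = v} : Finset E) := by
  ext x
  simp [mem_deadEnds_gentleSucc, hout]

open Classical in
theorem deadEnds_gentleSucc_of_unique {y : E} (hy : ∀ e, s e = v ↔ e = y) :
    deadEnds t (GentleSucc s t R) v = ({x | t x = v ∧ R x y} : Finset E) := by
  ext x
  simp [mem_deadEnds_gentleSucc, hy]

variable [DecidableEq E]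

open Classical in
theorem card_filter_rel_eq_one_of_card_eq_two
    (hge : ∀ a b c : E, b ≠ c → t b = s a → t c = s a → (R b a ↔ ¬ R c a))
    {y : E} (hy : s y = v) (hin : #{x | t x = v} = 2) : #{x | t x = v ∧ R x y} = 1 := by
  obtain ⟨x₁, x₂, h₁₂, hx⟩ := card_eq_two.1 hin
  have ht : t x₁ = v ∧ t x₂ = v := by
    simp only [Finset.ext_iff, mem_filter, mem_univ, true_and, mem_insert,
      mem_singleton] at hx
    exact ⟨(hx x₁).2 (Or.inl rfl), (hx x₂).2 (Or.inr rfl)⟩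
  have hR := hge y x₁ x₂ h₁₂ (ht.1.trans hy.symm) (ht.2.trans hy.symm)
  rw [← filter_filter, hx]
  by_cases h : R x₁ y
  · simp [filter_insert, filter_singleton, h, hR.1 h]
  · simp [filter_insert, filter_singleton, h, (not_iff_comm.1 hR.symm).1 h]

theorem card_out_add_card_deadEnds_add_eq_two
    (hgd : ∀ a b c : E, b ≠ c → t a = s b → t a = s c → (R a b ↔ ¬ R a c))
    (hge : ∀ a b c : E, b ≠ c → t b = s a → t c = s a → (R b a ↔ ¬ R c a))
    (hout : #{e | s e = v} ≤ 2) (hin : #{e | t e = v} ≤ 2) {a : ℕ}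
    (ha0 : 2 ≤ #{e | s e = v} ∨ 2 ≤ #{e | t e = v} → a = 0)
    (ha0' : ∀ x y : E, t x = v → s y = v → (∀ e, t e = v → e = x) →
        (∀ e, s e = v → e = y) → R x y → a = 0)
    (ha2 : (∀ e, s e ≠ v) → (∀ e, t e ≠ v) → a = 2)
    (ha1 : #{e | s e = v} ≤ 1 → #{e | t e = v} ≤ 1 → ((∃ e, s e = v) ∨ (∃ e, t e = v)) →
        (∀ x y : E, t x = v → s y = v → ¬ R x y) → a = 1) :
    #{e | s e = v} + #(deadEnds t (GentleSucc s t R) v) + a = 2 := by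
  obtain hO | hO | hO : #{e | s e = v} = 0 ∨ #{e | s e = v} = 1 ∨ #{e | s e = v} = 2 := by omega
  · have hno : ∀ e, s e ≠ v := by simpa [filter_eq_empty_iff] using hO
    rw [hO, deadEnds_gentleSucc_of_forall_ne hno]
    obtain hI | hI | hI : #{e | t e = v} = 0 ∨ #{e | t e = v} = 1 ∨ #{e | t e = v} = 2 := by omega
    · have hni : ∀ e, t e ≠ v := by simpa [filter_eq_empty_iff] using hI
      rw [hI, ha2 hno hni]
    · obtain ⟨x, hx⟩ := card_eq_one.1 hI
      have htx : t x = v := by simpa using hx.ge (mem_singleton_self x)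
      rw [hI, ha1 (by omega) (by omega) (Or.inr ⟨x, htx⟩) fun _ y _ hy => absurd hy (hno y)]
    · rw [hI, ha0 (Or.inr hI.ge)]
  · obtain ⟨y, hy⟩ := card_eq_one.1 hO
    have hsy : ∀ e, s e = v ↔ e = y := by simpa [Finset.ext_iff] using hy
    rw [hO, deadEnds_gentleSucc_of_unique hsy]
    obtain hI | hI | hI : #{e | t e = v} = 0 ∨ #{e | t e = v} = 1 ∨ #{e | t e = v} = 2 := by omega
    · have hni : ∀ e, t e ≠ v := by simpa [filter_eq_empty_iff] using hI
      rw [ha1 (by omega) (by omega) (Or.inl ⟨y, (hsy y).2 rfl⟩) fun x _ hx _ => absurd hx (hni x)]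
      simp [hni]
    · obtain ⟨x, hx⟩ := card_eq_one.1 hI
      have hxv : ∀ e, t e = v ↔ e = x := by simpa [Finset.ext_iff] using hx
      rw [← filter_filter, hx, filter_singleton]
      by_cases hR : R x y
      · rw [if_pos hR, card_singleton,
          ha0' x y ((hxv x).2 rfl) ((hsy y).2 rfl) (fun e => (hxv e).1) (fun e => (hsy e).1) hR]
      · rw [if_neg hR, card_empty, ha1 (by omega) (by omega) (Or.inl ⟨y, (hsy y).2 rfl⟩)
          fun x' y' hx' hy' => by rwa [(hxv x').1 hx', (hsy y').1 hy']]
    · rw [card_filter_rel_eq_one_of_card_eq_two hge ((hsy y).2 rfl) hI, ha0 (Or.inr hI.ge)]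
  · rw [hO, deadEnds_gentleSucc_eq_empty hgd hO.ge, card_empty, ha0 (Or.inl hO.ge)]

end Gentle

theorem sum_eq_zero_of_forall_sum_add_eq_two {V ι κ : Type*} [Fintype V] {S : Finset ι}
    {T : Finset κ} {f : ι → V → ℕ} {g : κ → V → ℕ} {a : V → ℕ} {θ : V → ℝ}
    (hcover : ∀ v, (∑ i ∈ S, f i v + ∑ j ∈ T, g j v) + a v = 2)
    (hf : ∀ i ∈ S, ∑ v, θ v * f i v = 0) (hg : ∀ j ∈ T, ∑ v, θ v * g j v = 0)
    (ha : ∀ v, θ v * a v = 0) : ∑ v, θ v = 0 := by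
  have : 2 * ∑ v, θ v = 0 := calc
    2 * ∑ v, θ v = ∑ v, θ v * ((∑ i ∈ S, f i v + ∑ j ∈ T, g j v + a v : ℕ) : ℝ) := by
      rw [mul_sum]
      simp [hcover, mul_comm]
    _ = ∑ i ∈ S, ∑ v, θ v * f i v + ∑ j ∈ T, ∑ v, θ v * g j v + ∑ v, θ v * a v := by
      push_cast
      simp only [mul_add, mul_sum, sum_add_distrib]
      rw [sum_comm (s := univ) (t := S), sum_comm (s := univ) (t := T)]
    _ = 0 := by simp [sum_eq_zero hf, sum_eq_zero hg, ha]
  linarith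

theorem stmt_17_general {V E : Type*} [Fintype V] [Fintype E] [DecidableEq V] [DecidableEq E]
    (s t : E → V) (R : E → E → Prop)
    (hout : ∀ v : V, (Finset.univ.filter fun e => s e = v).card ≤ 2)
    (hin : ∀ v : V, (Finset.univ.filter fun e => t e = v).card ≤ 2)
    (hgd : ∀ a b c : E, b ≠ c → t a = s b → t a = s c → (R a b ↔ ¬ R a c))
    (hge : ∀ a b c : E, b ≠ c → t b = s a → t c = s a → (R b a ↔ ¬ R c a))
    (Lines Circs : Finset (List E))
    (hLines : ∀ l ∈ Lines, IsMaxPath (GentleSucc s t R) l ∧ l.Nodup)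
    (hCircs : ∀ l ∈ Circs, IsRepCycle (GentleSucc s t R) l ∧ l.Nodup)
    (hpart : ∀ e : E, ((∑ l ∈ Lines, l.count e) + ∑ l ∈ Circs, l.count e) = 1)
    (a : V → ℕ)
    (ha0 : ∀ v : V, (2 ≤ (Finset.univ.filter fun e => s e = v).card ∨
        2 ≤ (Finset.univ.filter fun e => t e = v).card) → a v = 0)
    (ha0' : ∀ (v : V) (x y : E), t x = v → s y = v → (∀ e, t e = v → e = x) →
        (∀ e, s e = v → e = y) → R x y → a v = 0)
    (ha2 : ∀ v : V, (∀ e, s e ≠ v) → (∀ e, t e ≠ v) → a v = 2)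
    (ha1 : ∀ v : V, (Finset.univ.filter fun e => s e = v).card ≤ 1 →
        (Finset.univ.filter fun e => t e = v).card ≤ 1 →
        ((∃ e, s e = v) ∨ (∃ e, t e = v)) →
        (∀ x y : E, t x = v → s y = v → ¬ R x y) → a v = 1) :
    (∀ v : V,
      ((∑ l ∈ Lines, lineVisits s t l v) + ∑ l ∈ Circs, cycVisits s l v) + a v = 2) ∧
    (∀ θ : V → ℝ,
      (∀ l ∈ Lines, ∑ v : V, θ v * (lineVisits s t l v : ℝ) = 0) →
      (∀ l ∈ Circs, ∑ v : V, θ v * (cycVisits s l v : ℝ) = 0) →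
      (∀ v : V, (Finset.univ.filter fun e => s e = v).card ≤ 1 →
        (Finset.univ.filter fun e => t e = v).card ≤ 1 → θ v = 0) →
      ∑ v : V, θ v = 0) := by
  have hcover (v : V) :
      ((∑ l ∈ Lines, lineVisits s t l v) + ∑ l ∈ Circs, cycVisits s l v) + a v = 2 := by
    rw [sum_lineVisits_add_sum_cycVisits (fun l hl => (hLines l hl).1)
      (fun l hl => (hCircs l hl).1) hpart v]
    exact card_out_add_card_deadEnds_add_eq_two hgd hge (hout v) (hin v) (ha0 v) (ha0' v)
      (ha2 v) (ha1 v)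
  refine ⟨hcover, fun θ hθLines hθCircs hθ => sum_eq_zero_of_forall_sum_add_eq_two hcover
    hθLines hθCircs fun v => ?_⟩
  by_cases hdeg : #{e | s e = v} ≤ 1 ∧ #{e | t e = v} ≤ 1
  · rw [hθ v hdeg.1 hdeg.2, zero_mul]
  · rw [ha0 v (by omega), Nat.cast_zero, mul_zero]

/-- Let `A = KQ/⟨X⟩` be a gentle algebra whose arrows are partitioned into the maximal
nonzero paths (`Lines` = `MP(A)`) and the repeatable cycles up to cyclic permutation
(`Circs` = a set `X` of representatives of `Cyc(A)`).  With the multiplicities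
`a v ∈ {0,1,2}` given by the local arrow configuration at the vertex `v` (`a v = 0`
unless `e_v ∈ M̄P(A)`, i.e. unless `v` has at most one incoming and one outgoing arrow;
`a v = 0` for one incoming arrow `x` and one outgoing `y` with `xy ∈ X`; `a v = 2` if
there are no arrows at `v`; `a v = 1` otherwise), the identity
`2h = Σ_{c} [M(p_c)] + Σ_{p ∈ M̄P(A)} a_p [M(p)]` holds in `K_0(fd A)`, coordinatewise at
every vertex.  Consequently any `θ` vanishing on all `[M(p_c)]` and all `[M(p)]`,
`p ∈ M̄P(A)` (in particular `θ v = 0` whenever `e_v ∈ M̄P(A)`) satisfies `θ(h) = 0`. -/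
theorem stmt_17 {V E : Type*} [Fintype V] [Fintype E] [DecidableEq V] [DecidableEq E]
    (s t : E → V) (R : E → E → Prop)
    (hR : ∀ a b, R a b → t a = s b)
    (hout : ∀ v : V, (Finset.univ.filter fun e => s e = v).card ≤ 2)
    (hin : ∀ v : V, (Finset.univ.filter fun e => t e = v).card ≤ 2)
    (hgd : ∀ a b c : E, b ≠ c → t a = s b → t a = s c → (R a b ↔ ¬ R a c))
    (hge : ∀ a b c : E, b ≠ c → t b = s a → t c = s a → (R b a ↔ ¬ R c a))
    (Lines Circs : Finset (List E))
    (hLines : ∀ l ∈ Lines, IsMaxPath (GentleSucc s t R) l ∧ l.Nodup)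
    (hCircs : ∀ l ∈ Circs, IsRepCycle (GentleSucc s t R) l ∧ l.Nodup)
    (hpart : ∀ e : E, ((∑ l ∈ Lines, l.count e) + ∑ l ∈ Circs, l.count e) = 1)
    (a : V → ℕ)
    (ha0 : ∀ v : V, (2 ≤ (Finset.univ.filter fun e => s e = v).card ∨
        2 ≤ (Finset.univ.filter fun e => t e = v).card) → a v = 0)
    (ha0' : ∀ (v : V) (x y : E), t x = v → s y = v → (∀ e, t e = v → e = x) →
        (∀ e, s e = v → e = y) → R x y → a v = 0)
    (ha2 : ∀ v : V, (∀ e, s e ≠ v) → (∀ e, t e ≠ v) → a v = 2)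
    (ha1 : ∀ v : V, (Finset.univ.filter fun e => s e = v).card ≤ 1 →
        (Finset.univ.filter fun e => t e = v).card ≤ 1 →
        ((∃ e, s e = v) ∨ (∃ e, t e = v)) →
        (∀ x y : E, t x = v → s y = v → ¬ R x y) → a v = 1) :
    (∀ v : V,
      ((∑ l ∈ Lines, lineVisits s t l v) + ∑ l ∈ Circs, cycVisits s l v) + a v = 2) ∧
    (∀ θ : V → ℝ,
      (∀ l ∈ Lines, ∑ v : V, θ v * (lineVisits s t l v : ℝ) = 0) →
      (∀ l ∈ Circs, ∑ v : V, θ v * (cycVisits s l v : ℝ) = 0) →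
      (∀ v : V, (Finset.univ.filter fun e => s e = v).card ≤ 1 →
        (Finset.univ.filter fun e => t e = v).card ≤ 1 → θ v = 0) →
      ∑ v : V, θ v = 0) :=
  stmt_17_general s t R hout hin hgd hge Lines Circs hLines hCircs hpart a ha0 ha0' ha2 ha1
end
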